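/- With the lattice-path construction: (0) for every k ≥ 0, the point p_k = (x_k, y_k) does not lie on exactly one of the two families of lines, i.e. t ∣ x_k holds if and only if U ∣ y_k holds; (a) for every u ≥ 1 there is a unique index e(u) such that the y-coordinate of p_{e(u)} equals y(u) := U·u + j if u is even and y(u) := U·u + j^c if u is odd; write x(u) for the x-coordinate of p_{e(u)} and D(u) := s_0 + s_1 + ⋯ + s_{e(u)−1}. Then, with D̄ := D(u) mod t ∈ [0, t−1]: (i) x(u) = 2⌊D(u)/t⌋·t + i + D̄ if D̄ < i^c, and x(u) = 2⌊D(u)/t⌋·t + t + D̄ if D̄ ≥ i^c; (ii) e(u) = u + 2⌊D(u)/t⌋ if D̄ < i^c, and e(u) = u + 2⌊D(u)/t⌋ + 1 if D̄ ≥ i^c; (iii) D(u) = U·⌊u/2⌋ if u is even, and D(u) = U·⌊u/2⌋ + j^c if u is odd. -/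
import Mathlib


namespace Stmt13

/-- First component of `κ(x, y)`: `i` if `⌈x/t⌉` is odd, `i^c = t - i` otherwise. -/
def kap1 (t i x : ℕ) : ℕ := if ((x + t - 1) / t) % 2 = 1 then i else t - i

/-- Second component of `κ(x, y)`: `j` if `⌈y/U⌉` is odd, `j^c = U - j` otherwise. -/
def kap2 (U j y : ℕ) : ℕ := if ((y + U - 1) / U) % 2 = 1 then j else U - j

/-- The diagonal step length `s_k` taken from the point `P = (x, y)`: it is `0` when
`t ∣ x` and `U ∣ y`, and otherwise the least `s ≥ 1` with `t ∣ (x+s)` or `U ∣ (y+s)`,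
namely `min (t - x % t) (U - y % U)`. -/
def stepLen (t U : ℕ) (P : ℕ × ℕ) : ℕ :=
  if t ∣ P.1 ∧ U ∣ P.2 then 0 else min (t - P.1 % t) (U - P.2 % U)

/-- One step of the lattice-path recursion: from `p_k` produce `p_{k+1}`. -/
def next (t U i j : ℕ) (P : ℕ × ℕ) : ℕ × ℕ :=
  if t ∣ P.1 ∧ U ∣ P.2 then
    (P.1 + (t - kap1 t i P.1), P.2 + (U - kap2 U j P.2))
  else
    let s := min (t - P.1 % t) (U - P.2 % U)
    let u := P.1 + s
    let v := P.2 + s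
    if t ∣ u ∧ ¬U ∣ v then (u + (if (u / t) % 2 = 1 then t - i else i), v)
    else if U ∣ v ∧ ¬t ∣ u then (u, v + (if (v / U) % 2 = 1 then U - j else j))
    else (u, v)

/-- The sequence of points `p_0 = (i, j)`, `p_{k+1} = next p_k`. -/
def path (t U i j : ℕ) : ℕ → ℕ × ℕ
  | 0 => (i, j)
  | k + 1 => next t U i j (path t U i j k)

/-- `D = s_0 + s_1 + ⋯ + s_{e-1}`, the number of `(1,1)`-moves up to `p_e`. -/
def Dsum (t U i j e : ℕ) : ℕ := ∑ k ∈ Finset.range e, stepLen t U (path t U i j k)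

/-- `y(u) = U·u + j` for `u` even, `U·u + j^c` for `u` odd. -/
def ytgt (U j u : ℕ) : ℕ := U * u + if u % 2 = 0 then j else U - j

def XX (t i D : ℕ) : ℕ := 2 * (D / t) * t + (if D % t < t - i then i + D % t else t + D % t)

def CC (t i D : ℕ) : ℕ := 2 * (D / t) + (if D % t < t - i then 0 else 1)

lemma shift (t D s : ℕ) (h : D % t + s < t) :
    (D + s) % t = D % t + s ∧ (D + s) / t = D / t := by
  have hD : t * (D / t) + D % t = D := Nat.div_add_mod D t
  have ht : 0 < t := by omega
  have h1 : D + s = t * (D / t) + (D % t + s) := by omega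
  rw [h1, Nat.mul_add_mod, Nat.mod_eq_of_lt h, Nat.mul_add_div ht, Nat.div_eq_of_lt h]
  omega

lemma shift_cross (t D s : ℕ) (ht : 0 < t) (h : D % t + s = t) :
    (D + s) % t = 0 ∧ (D + s) / t = D / t + 1 := by
  have hD : t * (D / t) + D % t = D := Nat.div_add_mod D t
  have he : t * (D / t + 1) = t * (D / t) + t := by ring
  have h1 : D + s = t * (D / t + 1) + 0 := by omega
  rw [h1, Nat.mul_add_mod, Nat.mul_add_div ht, Nat.zero_mod, Nat.zero_div]
  omega

section
variable {t i : ℕ} (hi0 : 0 < i) (hit : i < t)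
include hi0 hit

lemma xx_mod (D : ℕ) : XX t i D % t = if D % t < t - i then i + D % t else D % t := by
  have ht : 0 < t := by omega
  have hd : D % t < t := Nat.mod_lt _ ht
  rw [XX]
  split <;> rename_i h
  · have e : 2 * (D / t) * t + (i + D % t) = t * (2 * (D / t)) + (i + D % t) := by ring
    rw [e, Nat.mul_add_mod]
    exact Nat.mod_eq_of_lt (by omega)
  · have e : 2 * (D / t) * t + (t + D % t) = t * (2 * (D / t) + 1) + D % t := by ring
    rw [e, Nat.mul_add_mod]
    exact Nat.mod_eq_of_lt hd

lemma xx_div (D : ℕ) : XX t i D / t = if D % t < t - i then 2 * (D / t) else 2 * (D / t) + 1 := by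
  have ht : 0 < t := by omega
  have hd : D % t < t := Nat.mod_lt _ ht
  rw [XX]
  split <;> rename_i h
  · have e : 2 * (D / t) * t + (i + D % t) = t * (2 * (D / t)) + (i + D % t) := by ring
    rw [e, Nat.mul_add_div ht, Nat.div_eq_of_lt (show i + D % t < t by omega)]
    omega
  · have e : 2 * (D / t) * t + (t + D % t) = t * (2 * (D / t) + 1) + D % t := by ring
    rw [e, Nat.mul_add_div ht, Nat.div_eq_of_lt hd]

lemma xx_mod_pos (D : ℕ) : 0 < XX t i D % t := by
  rw [xx_mod hi0 hit]; split <;> omega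

lemma xx_not_dvd (D : ℕ) : ¬ t ∣ XX t i D := by
  intro h
  have h2 := xx_mod_pos hi0 hit (t := t) (i := i) D
  obtain ⟨c, hc⟩ := h
  rw [hc, Nat.mul_mod_right] at h2
  omega

lemma xx_mod_lt (D : ℕ) : XX t i D % t < t := Nat.mod_lt _ (by omega)

lemma xx_add (D s : ℕ) (h : XX t i D % t + s < t) : XX t i (D + s) = XX t i D + s := by
  rw [xx_mod hi0 hit] at h
  rw [XX, XX]
  split at h <;> rename_i hc
  · obtain ⟨hm, hd⟩ := shift t D s (by omega)
    rw [hm, hd, if_pos hc, if_pos (by omega)]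
    omega
  · obtain ⟨hm, hd⟩ := shift t D s (by omega)
    rw [hm, hd, if_neg hc, if_neg (by omega)]
    omega

lemma cc_add (D s : ℕ) (h : XX t i D % t + s < t) : CC t i (D + s) = CC t i D := by
  rw [xx_mod hi0 hit] at h
  rw [CC, CC]
  split at h <;> rename_i hc
  · obtain ⟨hm, hd⟩ := shift t D s (by omega)
    rw [hm, hd, if_pos hc, if_pos (by omega)]
  · obtain ⟨hm, hd⟩ := shift t D s (by omega)
    rw [hm, hd, if_neg hc, if_neg (by omega)]

lemma xx_cross (D : ℕ) :
    XX t i D + (t - XX t i D % t) = t * (2 * (D / t) + (if D % t < t - i then 1 else 2)) ∧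
    XX t i (D + (t - XX t i D % t)) =
      XX t i D + (t - XX t i D % t) +
        (if ((XX t i D + (t - XX t i D % t)) / t) % 2 = 1 then t - i else i) ∧
    CC t i (D + (t - XX t i D % t)) = CC t i D + 1 := by
  have ht : 0 < t := by omega
  have hd : D % t < t := Nat.mod_lt _ ht
  have hm := xx_mod hi0 hit D
  by_cases hc : D % t < t - i
  · rw [if_pos hc] at hm
    set s := t - XX t i D % t with hs
    rw [hm] at hs
    have hds : D % t + s = t - i := by omega
    obtain ⟨h1, h2⟩ := shift t D s (by omega)
    rw [hds] at h1
    have hu : XX t i D + s = t * (2 * (D / t) + 1) := by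
      rw [XX, if_pos hc]; ring_nf; omega
    have hq : (XX t i D + s) / t = 2 * (D / t) + 1 := by
      rw [hu, Nat.mul_div_cancel_left _ ht]
    refine ⟨by rw [hu, if_pos hc], ?_, ?_⟩
    · rw [hq, XX, h1, h2, if_neg (by omega), hu]
      have : (2 * (D / t) + 1) % 2 = 1 := by omega
      rw [this, if_pos rfl]
      have e : t * (2 * (D / t) + 1) = 2 * (D / t) * t + t := by ring
      omega
    · rw [CC, CC, h1, h2, if_neg (by omega), if_pos hc]
  · rw [if_neg hc] at hm
    set s := t - XX t i D % t with hs
    rw [hm] at hs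
    have hds : D % t + s = t := by omega
    obtain ⟨h1, h2⟩ := shift_cross t D s ht hds
    have hu : XX t i D + s = t * (2 * (D / t) + 2) := by
      rw [XX, if_neg hc]; ring_nf; omega
    have hq : (XX t i D + s) / t = 2 * (D / t) + 2 := by
      rw [hu, Nat.mul_div_cancel_left _ ht]
    refine ⟨by rw [hu, if_neg hc], ?_, ?_⟩
    · rw [hq, XX, h1, h2, if_pos (by omega), hu]
      have : (2 * (D / t) + 2) % 2 = 0 := by omega
      rw [this, if_neg (by omega)]
      have e : t * (2 * (D / t) + 2) = 2 * (D / t) * t + 2 * t := by ring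
      have e2 : 2 * (D / t + 1) * t = 2 * (D / t) * t + 2 * t := by ring
      omega
    · rw [CC, CC, h1, h2, if_pos (by omega), if_neg hc]
      omega

lemma kap_sub (x : ℕ) (hx : t ∣ x) (h0 : 0 < x) :
    t - kap1 t i x = if (x / t) % 2 = 1 then t - i else i := by
  have ht : 0 < t := by omega
  obtain ⟨m, rfl⟩ := hx
  have hm : 0 < m := by
    rcases Nat.eq_zero_or_pos m with h | h
    · subst h; simp at h0
    · exact h
  have hdiv : t * m / t = m := Nat.mul_div_cancel_left m ht
  have hceil : (t * m + t - 1) / t = m := by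
    have e : t * m + t - 1 = t * m + (t - 1) := by omega
    rw [e, Nat.mul_add_div ht, Nat.div_eq_of_lt (by omega)]
    omega
  rw [kap1, hceil, hdiv]
  split <;> omega

lemma xx_succ_lt (D : ℕ) : XX t i D < XX t i (D + 1) := by
  by_cases h : XX t i D % t + 1 < t
  · rw [xx_add hi0 hit D 1 h]; omega
  · have hlt := xx_mod_lt hi0 hit (t := t) (i := i) D
    have hs : t - XX t i D % t = 1 := by omega
    obtain ⟨_, h2, _⟩ := xx_cross hi0 hit D
    rw [hs] at h2
    rw [h2]
    split <;> omega

lemma xx_strictMono : StrictMono (XX t i) :=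
  strictMono_nat_of_lt_succ fun D => xx_succ_lt hi0 hit D

lemma no_skip (D T : ℕ) (hDT : D < T) (hT : T % t = 0 ∨ T % t = t - i) :
    D + (t - XX t i D % t) ≤ T := by
  have ht : 0 < t := by omega
  have hq : D / t ≤ T / t := Nat.div_le_div_right (le_of_lt hDT)
  have hD := Nat.div_add_mod D t
  have hT' := Nat.div_add_mod T t
  have hdx : D % t < t := Nat.mod_lt _ ht
  rw [xx_mod hi0 hit]
  rcases hT with hT | hT <;>
  rcases Nat.lt_or_ge (D / t) (T / t) with hlt | hge
  · have h1 : t * (D / t) + t ≤ t * (T / t) := by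
      calc t * (D / t) + t = t * (D / t + 1) := by ring
        _ ≤ t * (T / t) := Nat.mul_le_mul_left t (by omega)
    split <;> omega
  · have heq : D / t = T / t := le_antisymm hq hge
    have h1 : t * (D / t) = t * (T / t) := by rw [heq]
    split <;> omega
  · have h1 : t * (D / t) + t ≤ t * (T / t) := by
      calc t * (D / t) + t = t * (D / t + 1) := by ring
        _ ≤ t * (T / t) := Nat.mul_le_mul_left t (by omega)
    split <;> omega
  · have heq : D / t = T / t := le_antisymm hq hge
    have h1 : t * (D / t) = t * (T / t) := by rw [heq]
    split <;> omega

end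

section
variable {U j : ℕ} (hj0 : 0 < j) (hjU : j < U)
include hj0 hjU

/-- the distinguished `D`-value for level `u`. -/
def Dtgt (U j u : ℕ) : ℕ := U * (u / 2) + (if u % 2 = 1 then U - j else 0)

lemma dtgt_mod (u : ℕ) : Dtgt U j u % U = (if u % 2 = 1 then U - j else 0) ∧
    Dtgt U j u / U = u / 2 := by
  have hU : 0 < U := by omega
  rw [Dtgt]
  constructor
  · rw [Nat.mul_add_mod]
    split <;> [exact Nat.mod_eq_of_lt (by omega); exact Nat.zero_mod U]
  · rw [Nat.mul_add_div hU]
    split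
    · rw [Nat.div_eq_of_lt (show U - j < U by omega)]
      omega
    · rw [Nat.zero_div]
      omega


lemma xx_dtgt (u : ℕ) : XX U j (Dtgt U j u) = ytgt U j u := by
  obtain ⟨h1, h2⟩ := dtgt_mod hj0 hjU (U := U) (j := j) u
  rw [XX, h1, h2, ytgt]
  by_cases hp : u % 2 = 1
  · obtain ⟨q, rfl⟩ : ∃ q, u = 2 * q + 1 := ⟨u / 2, by omega⟩
    have hq : (2 * q + 1) / 2 = q := by omega
    rw [hq, if_pos (show (2 * q + 1) % 2 = 1 by omega),
      if_neg (lt_irrefl (U - j)), if_neg (show ¬(2 * q + 1) % 2 = 0 by omega)]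
    have e : U * (2 * q + 1) = 2 * q * U + U := by ring
    omega
  · obtain ⟨q, rfl⟩ : ∃ q, u = 2 * q := ⟨u / 2, by omega⟩
    have hq : (2 * q) / 2 = q := by omega
    rw [hq, if_neg (show ¬(2 * q) % 2 = 1 by omega),
      if_pos (show 0 < U - j by omega), if_pos (show (2 * q) % 2 = 0 by omega)]
    have e : U * (2 * q) = 2 * q * U := by ring
    omega

lemma cc_dtgt (u : ℕ) : CC U j (Dtgt U j u) = u := by
  obtain ⟨h1, h2⟩ := dtgt_mod hj0 hjU (U := U) (j := j) u
  rw [CC, h1, h2]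
  by_cases hp : u % 2 = 1
  · rw [if_pos hp, if_neg (by omega)]; omega
  · rw [if_neg hp, if_pos (by omega)]; omega

lemma ytgt_mod (u : ℕ) : ytgt U j u % U = (if u % 2 = 0 then j else U - j) := by
  rw [ytgt, Nat.mul_add_mod]
  split <;> exact Nat.mod_eq_of_lt (by omega)

lemma ytgt_not_dvd (u : ℕ) : ¬ U ∣ ytgt U j u := by
  intro h
  obtain ⟨c, hc⟩ := h
  have h2 := ytgt_mod hj0 hjU (U := U) (j := j) u
  rw [hc, Nat.mul_mod_right] at h2
  split at h2 <;> omega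

end

lemma next_corner (t U i j : ℕ) (P : ℕ × ℕ) (h : t ∣ P.1 ∧ U ∣ P.2) :
    next t U i j P = (P.1 + (t - kap1 t i P.1), P.2 + (U - kap2 U j P.2)) := by
  rw [next, if_pos h]

lemma next_xjump (t U i j : ℕ) (P : ℕ × ℕ) (h : ¬(t ∣ P.1 ∧ U ∣ P.2))
    (h2 : t ∣ (P.1 + min (t - P.1 % t) (U - P.2 % U)))
    (h3 : ¬ U ∣ (P.2 + min (t - P.1 % t) (U - P.2 % U))) :
    next t U i j P = (P.1 + min (t - P.1 % t) (U - P.2 % U)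
        + (if ((P.1 + min (t - P.1 % t) (U - P.2 % U)) / t) % 2 = 1 then t - i else i),
      P.2 + min (t - P.1 % t) (U - P.2 % U)) := by
  rw [next, if_neg h]
  simp only []
  rw [if_pos ⟨h2, h3⟩]

lemma next_yjump (t U i j : ℕ) (P : ℕ × ℕ) (h : ¬(t ∣ P.1 ∧ U ∣ P.2))
    (h2 : ¬ t ∣ (P.1 + min (t - P.1 % t) (U - P.2 % U)))
    (h3 : U ∣ (P.2 + min (t - P.1 % t) (U - P.2 % U))) :
    next t U i j P = (P.1 + min (t - P.1 % t) (U - P.2 % U),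
      P.2 + min (t - P.1 % t) (U - P.2 % U)
        + (if ((P.2 + min (t - P.1 % t) (U - P.2 % U)) / U) % 2 = 1 then U - j else j)) := by
  rw [next, if_neg h]
  simp only []
  rw [if_neg (by tauto), if_pos ⟨h3, h2⟩]

lemma next_carrive (t U i j : ℕ) (P : ℕ × ℕ) (h : ¬(t ∣ P.1 ∧ U ∣ P.2))
    (h2 : t ∣ (P.1 + min (t - P.1 % t) (U - P.2 % U)))
    (h3 : U ∣ (P.2 + min (t - P.1 % t) (U - P.2 % U))) :
    next t U i j P = (P.1 + min (t - P.1 % t) (U - P.2 % U),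
      P.2 + min (t - P.1 % t) (U - P.2 % U)) := by
  rw [next, if_neg h]
  simp only []
  rw [if_neg (by tauto), if_neg (by tauto)]


section
variable {t U i j : ℕ}

def Good (t U i j k : ℕ) : Prop :=
  ((path t U i j k).1 = XX t i (Dsum t U i j k) ∧
   (path t U i j k).2 = XX U j (Dsum t U i j k) ∧
   k = CC t i (Dsum t U i j k) + CC U j (Dsum t U i j k))
  ∨ (t ∣ (path t U i j k).1 ∧ U ∣ (path t U i j k).2 ∧
     0 < (path t U i j k).1 ∧ 0 < (path t U i j k).2 ∧
     XX t i (Dsum t U i j k) = (path t U i j k).1 + (t - kap1 t i (path t U i j k).1) ∧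
     XX U j (Dsum t U i j k) = (path t U i j k).2 + (U - kap2 U j (path t U i j k).2) ∧
     k + 1 = CC t i (Dsum t U i j k) + CC U j (Dsum t U i j k))

lemma dsum_zero : Dsum t U i j 0 = 0 := Finset.sum_range_zero _

lemma dsum_succ (k : ℕ) :
    Dsum t U i j (k + 1) = Dsum t U i j k + stepLen t U (path t U i j k) :=
  Finset.sum_range_succ _ _

lemma path_succ (k : ℕ) : path t U i j (k + 1) = next t U i j (path t U i j k) := rfl

variable (hi0 : 0 < i) (hit : i < t) (hj0 : 0 < j) (hjU : j < U)
include hi0 hit hj0 hjU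

lemma xx_zero : XX t i 0 = i := by
  rw [XX, Nat.zero_div, Nat.zero_mod, if_pos (by omega)]
  omega

lemma cc_zero : CC t i 0 = 0 := by
  rw [CC, Nat.zero_div, Nat.zero_mod, if_pos (by omega)]

lemma good_all : ∀ k, Good t U i j k := by
  intro k
  induction k with
  | zero =>
    left
    rw [dsum_zero, xx_zero hi0 hit hj0 hjU, xx_zero hj0 hjU hi0 hit,
      cc_zero hi0 hit hj0 hjU, cc_zero hj0 hjU hi0 hit]
    exact ⟨rfl, rfl, rfl⟩
  | succ k ih =>
    have hds : Dsum t U i j (k + 1) = Dsum t U i j k + stepLen t U (path t U i j k) :=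
      dsum_succ k
    have hpn : path t U i j (k + 1) = next t U i j (path t U i j k) := path_succ k
    set D := Dsum t U i j k with hD
    set P := path t U i j k with hP
    rcases ih with ⟨hx, hy, hk⟩ | ⟨hd1, hd2, hp1, hp2, he1, he2, hk⟩
    · -- noncorner point
      rw [← hD] at hx hy hk
      rw [← hP] at hx hy
      have ha := xx_mod_pos hi0 hit D
      have ha' := xx_mod_lt hi0 hit D
      have hb := xx_mod_pos hj0 hjU D
      have hb' := xx_mod_lt hj0 hjU D
      have hnc : ¬(t ∣ P.1 ∧ U ∣ P.2) := by
        rintro ⟨h1, -⟩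
        exact xx_not_dvd hi0 hit D (hx ▸ h1)
      obtain ⟨hxu, hxval, hxcc⟩ := xx_cross hi0 hit D
      obtain ⟨hyu, hyval, hycc⟩ := xx_cross hj0 hjU D
      set sx := t - XX t i D % t with hsx
      set sy := U - XX U j D % U with hsy
      have hsx1 : 1 ≤ sx := by omega
      have hsy1 : 1 ≤ sy := by omega
      have hmin : min (t - P.1 % t) (U - P.2 % U) = min sx sy := by rw [hx, hy]
      have hstep : stepLen t U P = min sx sy := by rw [stepLen, if_neg hnc, hmin]
      have hdvdx : t ∣ XX t i D + sx := ⟨_, hxu⟩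
      have hdvdy : U ∣ XX U j D + sy := ⟨_, hyu⟩
      rcases lt_trichotomy sx sy with hlt | heq | hgt
      · -- crossing a vertical line only
        have hm : min sx sy = sx := min_eq_left hlt.le
        have hyadd : XX U j (D + sx) = XX U j D + sx := xx_add hj0 hjU D sx (by omega)
        have hycc2 : CC U j (D + sx) = CC U j D := cc_add hj0 hjU D sx (by omega)
        have hnvy : ¬ U ∣ (P.2 + min (t - P.1 % t) (U - P.2 % U)) := by
          rw [hmin, hm, hy, ← hyadd]
          exact xx_not_dvd hj0 hjU _
        have hnxt := next_xjump t U i j P hnc (by rw [hmin, hm, hx]; exact hdvdx) hnvy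
        have hnew : path t U i j (k + 1) = (XX t i (D + sx), XX U j (D + sx)) := by
          rw [hpn, hnxt, hmin, hm, hx, hy, Prod.mk.injEq]
          exact ⟨hxval.symm, hyadd.symm⟩
        left
        rw [hnew, hds, hstep, hm, hxcc, hycc2]
        exact ⟨rfl, rfl, by omega⟩
      · -- arriving at a corner
        have hm : min sx sy = sx := by rw [heq, min_self]
        have hnxt := next_carrive t U i j P hnc (by rw [hmin, hm, hx]; exact hdvdx)
          (by rw [hmin, hm, hy, heq]; exact hdvdy)
        have hnew : path t U i j (k + 1) = (XX t i D + sx, XX U j D + sx) := by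
          rw [hpn, hnxt, hmin, hm, hx, hy]
        right
        rw [hnew, hds, hstep, hm]
        have hx0 : 0 < XX t i D + sx := by omega
        have hy0 : 0 < XX U j D + sx := by omega
        refine ⟨hdvdx, heq ▸ hdvdy, hx0, hy0, ?_, ?_, ?_⟩
        · dsimp only
          rw [kap_sub hi0 hit _ hdvdx hx0]
          exact hxval
        · dsimp only
          rw [heq]
          rw [show kap2 U j (XX U j D + sy) = kap1 U j (XX U j D + sy) from rfl]
          rw [kap_sub hj0 hjU _ hdvdy (heq ▸ hy0)]
          exact hyval
        · rw [hxcc, heq, hycc]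
          omega
      · -- crossing a horizontal line only
        have hm : min sx sy = sy := min_eq_right hgt.le
        have hxadd : XX t i (D + sy) = XX t i D + sy := xx_add hi0 hit D sy (by omega)
        have hxcc2 : CC t i (D + sy) = CC t i D := cc_add hi0 hit D sy (by omega)
        have hnvx : ¬ t ∣ (P.1 + min (t - P.1 % t) (U - P.2 % U)) := by
          rw [hmin, hm, hx, ← hxadd]
          exact xx_not_dvd hi0 hit _
        have hnxt := next_yjump t U i j P hnc hnvx (by rw [hmin, hm, hy]; exact hdvdy)
        have hnew : path t U i j (k + 1) = (XX t i (D + sy), XX U j (D + sy)) := by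
          rw [hpn, hnxt, hmin, hm, hx, hy, Prod.mk.injEq]
          exact ⟨hxadd.symm, hyval.symm⟩
        left
        rw [hnew, hds, hstep, hm, hxcc2, hycc]
        exact ⟨rfl, rfl, by omega⟩
    · -- corner point: jump diagonally across
      rw [← hD] at he1 he2 hk
      rw [← hP] at hd1 hd2 hp1 hp2 he1 he2
      have hstep0 : stepLen t U P = 0 := by rw [stepLen, if_pos ⟨hd1, hd2⟩]
      have hnxt := next_corner t U i j P ⟨hd1, hd2⟩
      have hnew : path t U i j (k + 1) = (XX t i D, XX U j D) := by
        rw [hpn, hnxt, Prod.mk.injEq]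
        exact ⟨he1.symm, he2.symm⟩
      left
      rw [hnew, hds, hstep0, add_zero]
      exact ⟨rfl, rfl, by omega⟩

lemma steplen_pos (k : ℕ)
    (hx : (path t U i j k).1 = XX t i (Dsum t U i j k))
    (hy : (path t U i j k).2 = XX U j (Dsum t U i j k)) :
    1 ≤ stepLen t U (path t U i j k) := by
  have ha' := xx_mod_lt hi0 hit (Dsum t U i j k)
  have hb' := xx_mod_lt hj0 hjU (Dsum t U i j k)
  have hnc : ¬(t ∣ (path t U i j k).1 ∧ U ∣ (path t U i j k).2) := by
    rintro ⟨h1, -⟩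
    exact xx_not_dvd hi0 hit _ (hx ▸ h1)
  rw [stepLen, if_neg hnc, hx, hy]
  omega

lemma dsum_lb : ∀ m, m ≤ Dsum t U i j (2 * m) := by
  intro m
  induction m with
  | zero => exact Nat.zero_le _
  | succ m ih =>
    have e1 : 2 * (m + 1) = (2 * m + 1) + 1 := by ring
    have h1 := dsum_succ (t := t) (U := U) (i := i) (j := j) (2 * m)
    have h2 := dsum_succ (t := t) (U := U) (i := i) (j := j) (2 * m + 1)
    rw [e1, h2]
    rcases good_all hi0 hit hj0 hjU (2 * m) with h | h
    · have := steplen_pos hi0 hit hj0 hjU (2 * m) h.1 h.2.1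
      omega
    · have hstep0 : stepLen t U (path t U i j (2 * m)) = 0 := by
        rw [stepLen, if_pos ⟨h.1, h.2.1⟩]
      rcases good_all hi0 hit hj0 hjU (2 * m + 1) with h' | h'
      · have := steplen_pos hi0 hit hj0 hjU (2 * m + 1) h'.1 h'.2.1
        omega
      · exfalso
        have hk := h.2.2.2.2.2.2
        have hk' := h'.2.2.2.2.2.2
        rw [h1, hstep0, add_zero] at hk'
        omega

lemma exists_hit (T : ℕ) (hTmod : T % U = 0 ∨ T % U = U - j) :
    ∃ e, Dsum t U i j e = T ∧ (path t U i j e).1 = XX t i T ∧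
      (path t U i j e).2 = XX U j T ∧ e = CC t i T + CC U j T := by
  have hex : ∃ k, T ≤ Dsum t U i j k := ⟨2 * T, dsum_lb hi0 hit hj0 hjU T⟩
  classical
  obtain ⟨k, hk, hmink⟩ : ∃ k, T ≤ Dsum t U i j k ∧ ∀ k' < k, ¬ T ≤ Dsum t U i j k' :=
    ⟨Nat.find hex, Nat.find_spec hex, fun k' h => Nat.find_min hex h⟩
  have hEq : Dsum t U i j k = T := by
    rcases Nat.eq_zero_or_pos k with h0 | h0
    · rw [h0, dsum_zero]
      rw [h0, dsum_zero] at hk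
      omega
    · obtain ⟨k', rfl⟩ : ∃ k', k = k' + 1 := ⟨k - 1, by omega⟩
      have hlt : ¬ T ≤ Dsum t U i j k' := hmink k' (by omega)
      push_neg at hlt
      have hds := dsum_succ (t := t) (U := U) (i := i) (j := j) k'
      rcases good_all hi0 hit hj0 hjU k' with h | h
      · have hnc : ¬(t ∣ (path t U i j k').1 ∧ U ∣ (path t U i j k').2) := by
          rintro ⟨h1, -⟩
          exact xx_not_dvd hi0 hit _ (h.1 ▸ h1)
        have hstep : stepLen t U (path t U i j k')
            = min (t - XX t i (Dsum t U i j k') % t) (U - XX U j (Dsum t U i j k') % U) := by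
          rw [stepLen, if_neg hnc, h.1, h.2.1]
        have hns := no_skip hj0 hjU (Dsum t U i j k') T hlt hTmod
        omega
      · have hstep0 : stepLen t U (path t U i j k') = 0 := by
          rw [stepLen, if_pos ⟨h.1, h.2.1⟩]
        omega
  rcases good_all hi0 hit hj0 hjU k with h | h
  · exact ⟨k, hEq, hEq ▸ h.1, hEq ▸ h.2.1, hEq ▸ h.2.2⟩
  · have hstep0 : stepLen t U (path t U i j k) = 0 := by
      rw [stepLen, if_pos ⟨h.1, h.2.1⟩]
    have hds := dsum_succ (t := t) (U := U) (i := i) (j := j) k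
    have hEq2 : Dsum t U i j (k + 1) = T := by omega
    rcases good_all hi0 hit hj0 hjU (k + 1) with h' | h'
    · exact ⟨k + 1, hEq2, hEq2 ▸ h'.1, hEq2 ▸ h'.2.1, hEq2 ▸ h'.2.2⟩
    · exfalso
      have hk1 := h.2.2.2.2.2.2
      have hk2 := h'.2.2.2.2.2.2
      rw [hds, hstep0, add_zero] at hk2
      omega

end

theorem stmt13 (n t i j : ℕ) (hn : 3 ≤ n) (ht2 : 2 ≤ t) (htn : t ≤ n - 1)
    (hi0 : 0 < i) (hit : i < t) (hj0 : 0 < j) (hjU : j < n - t + 1) :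
    -- (0) each point lies on both families of lines or on neither
    (∀ k, t ∣ (path t (n - t + 1) i j k).1 ↔ (n - t + 1) ∣ (path t (n - t + 1) i j k).2) ∧
    -- (a) existence and uniqueness of `e(u)`, and (i)–(iii)
    (∀ u, 1 ≤ u →
      (∃! e, (path t (n - t + 1) i j e).2 = ytgt (n - t + 1) j u) ∧
      ∀ e, (path t (n - t + 1) i j e).2 = ytgt (n - t + 1) j u →
        -- (iii)
        Dsum t (n - t + 1) i j e
            = (n - t + 1) * (u / 2) + (if u % 2 = 1 then (n - t + 1) - j else 0) ∧
        -- (i) and (ii), case `D̄ < i^c`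
        (Dsum t (n - t + 1) i j e % t < t - i →
          (path t (n - t + 1) i j e).1
              = 2 * (Dsum t (n - t + 1) i j e / t) * t + i + Dsum t (n - t + 1) i j e % t ∧
            e = u + 2 * (Dsum t (n - t + 1) i j e / t)) ∧
        -- (i) and (ii), case `D̄ ≥ i^c`
        (t - i ≤ Dsum t (n - t + 1) i j e % t →
          (path t (n - t + 1) i j e).1
              = 2 * (Dsum t (n - t + 1) i j e / t) * t + t + Dsum t (n - t + 1) i j e % t ∧
            e = u + 2 * (Dsum t (n - t + 1) i j e / t) + 1)) := by
  set U := n - t + 1 with hU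
  constructor
  · intro k
    rcases good_all hi0 hit hj0 hjU k with h | h
    · exact iff_of_false (fun h1 => xx_not_dvd hi0 hit _ (h.1 ▸ h1))
        (fun h2 => xx_not_dvd hj0 hjU _ (h.2.1 ▸ h2))
    · exact iff_of_true h.1 h.2.1
  · intro u hu
    set T := Dtgt U j u with hT
    have hTmod' := dtgt_mod hj0 hjU (U := U) (j := j) u
    have hTmod : T % U = 0 ∨ T % U = U - j := by
      rw [hT, hTmod'.1]
      split
      · right; rfl
      · left; rfl
    -- master lemma
    have master : ∀ e, (path t U i j e).2 = ytgt U j u →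
        (path t U i j e).1 = XX t i T ∧ Dsum t U i j e = T ∧ e = CC t i T + CC U j T := by
      intro e he
      rcases good_all hi0 hit hj0 hjU e with h | h
      · have hyy : XX U j (Dsum t U i j e) = XX U j T := by
          rw [← h.2.1, he, hT, xx_dtgt hj0 hjU]
        have hDe : Dsum t U i j e = T := (xx_strictMono hj0 hjU).injective hyy
        exact ⟨hDe ▸ h.1, hDe, hDe ▸ h.2.2⟩
      · exfalso
        exact ytgt_not_dvd hj0 hjU u (he ▸ h.2.1)
    obtain ⟨e0, hDe0, hx0, hy0, he0⟩ := exists_hit hi0 hit hj0 hjU T hTmod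
    have hy0' : (path t U i j e0).2 = ytgt U j u := by
      rw [hy0, hT, xx_dtgt hj0 hjU]
    constructor
    · refine ⟨e0, hy0', fun e' he' => ?_⟩
      rw [(master e' he').2.2, he0]
    · intro e he
      obtain ⟨hx, hDe, hE⟩ := master e he
      have hcc := cc_dtgt hj0 hjU (U := U) (j := j) u
      refine ⟨by rw [hDe, hT, Dtgt], ?_, ?_⟩
      · intro hcase
        rw [hDe] at hcase ⊢
        constructor
        · rw [hx, XX, if_pos hcase]
          omega
        · rw [hE, CC, if_pos hcase, hcc]
          omega
      · intro hcase
        rw [hDe] at hcase ⊢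
        constructor
        · rw [hx, XX, if_neg (by omega)]
          omega
        · rw [hE, CC, if_neg (by omega), hcc]
          omega

end Stmt13
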